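/- Let δ > 0 and let (x_j)_{j∈ℤ} be real numbers. For each x ∈ ℝ let u_x : ℝ → [0, ∞) be a measurable function with ∫_ℝ u_x(t) dt = 1 and u_x vanishing outside [x − δ, x + δ]. Assume there exist constants 0 < A ≤ B < ∞ such that for EVERY sequence (t_j)_{j∈ℤ} with t_j ∈ [x_j − δ, x_j + δ] for all j, the family (t ↦ e^{i t_j t})_{j∈ℤ} is a frame for L²([−π, π]) with bounds A, B. Define Ψ(x) ∈ L²([−π, π]) by Ψ(x)(t) := (2π)^{−1/2} ∫_ℝ u_x(s) e^{i s t} ds. Then (Ψ(x_j))_{j∈ℤ} is a frame for L²([−π, π]): there exist constants 0 < A′ ≤ B′ < ∞ (one may take A′ = A/(2π) and B′ = B/(2π)) such that A′‖u‖ ≤ (∑_{j∈ℤ} |⟨u, Ψ(x_j)⟩|²)^{1/2} ≤ B′‖u‖ for all u ∈ L²([−π, π]). -/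

import Mathlib

open MeasureTheory

/-- Lebesgue measure restricted to `[-π, π]`. -/
noncomputable def muPi : Measure ℝ := volume.restrict (Set.Icc (-Real.pi) Real.pi)

/-- The pairing `⟨f, g⟩ = ∫_{-π}^{π} f(t) conj(g(t)) dt` of `f ∈ L²([-π, π])` with a
function `g : ℝ → ℂ` (the inner product of `f` with `g` in `L²([-π, π])`). -/
noncomputable def coefWith (g : ℝ → ℂ) (f : Lp ℂ 2 muPi) : ℂ :=
  ∫ t, f t * (starRingEnd ℂ) (g t) ∂muPi

/-- A family of functions `g j : ℝ → ℂ` is a frame for `L²([-π, π])` with bounds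
`A, B` if for every `f ∈ L²([-π, π])` the sum `∑ j, ‖⟨f, g j⟩‖²` converges to some `S` with
`A ‖f‖ ≤ √S ≤ B ‖f‖`. -/
def IsFrameCoef {J : Type*} (g : J → ℝ → ℂ) (A B : ℝ) : Prop :=
  ∀ f : Lp ℂ 2 muPi, ∃ S : ℝ, HasSum (fun j => ‖coefWith (g j) f‖ ^ 2) S ∧
    A * ‖f‖ ≤ Real.sqrt S ∧ Real.sqrt S ≤ B * ‖f‖

/-! Write `F f r = ⟨f, e^{ir·}⟩`. By Fubini the coefficient of `f` against `Ψ(x_j)` is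
`(2π)^{-1/2} ∫ u_{x_j}(r) F f r dr`, and by the mean value theorem for averages its real and
imaginary parts are `Re F f (r_j)` and `Im F f (r'_j)` for some `r_j, r'_j ∈ [x_j - δ, x_j + δ]`.
With `f^*(s) = conj f(-s)`, the functions `(f + f^*)/2` and `(f - f^*)/(2i)` have transforms
`Re F f` and `Im F f`, and their squared norms add up to `‖f‖²`. Applying the frame bounds of the
exponentials at the points `r_j` to the first and at the points `r'_j` to the second gives the
frame bounds for `Ψ(x_j)`. -/

lemma exists_mem_Icc_integral_mul_eq {w φ : ℝ → ℝ} {a b : ℝ} (hw0 : ∀ t, 0 ≤ w t)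
    (hw1 : ∫ t, w t = 1) (hsupp : ∀ t, w t ≠ 0 → t ∈ Set.Icc a b)
    (hφ : ContinuousOn φ (Set.Icc a b)) : ∃ r ∈ Set.Icc a b, ∫ t, w t * φ t = φ r := by
  have hw : Integrable w := integrable_of_integral_eq_one hw1
  have hvanish : ∀ t ∉ Set.Icc a b, w t = 0 := fun t ht => by_contra fun h => ht (hsupp t h)
  obtain ⟨t₀, ht₀⟩ := exists_ne_zero_of_integral_ne_zero (hw1 ▸ one_ne_zero)
  have hne : (Set.Icc a b).Nonempty := ⟨t₀, hsupp t₀ ht₀⟩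
  obtain ⟨p, hp, hmin⟩ := isCompact_Icc.exists_isMinOn hne hφ
  obtain ⟨q, hq, hmax⟩ := isCompact_Icc.exists_isMaxOn hne hφ
  have hwφ : IntegrableOn (fun t => w t * φ t) (Set.Icc a b) :=
    hw.integrableOn.mul_continuousOn hφ isCompact_Icc
  have hmass : ∫ t in Set.Icc a b, w t = 1 := by
    rwa [setIntegral_eq_integral_of_forall_compl_eq_zero hvanish]
  have hconst (c : ℝ) : ∫ t in Set.Icc a b, w t * c = c := by
    rw [integral_mul_const, hmass, one_mul]
  rw [← setIntegral_eq_integral_of_forall_compl_eq_zero fun t ht => by rw [hvanish t ht, zero_mul]]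
  have hlower : φ p ≤ ∫ t in Set.Icc a b, w t * φ t := by
    conv_lhs => rw [← hconst (φ p)]
    exact setIntegral_mono_on (hw.integrableOn.mul_const _) hwφ measurableSet_Icc
      fun t ht => mul_le_mul_of_nonneg_left (hmin ht) (hw0 t)
  have hupper : ∫ t in Set.Icc a b, w t * φ t ≤ φ q := by
    conv_rhs => rw [← hconst (φ q)]
    exact setIntegral_mono_on hwφ (hw.integrableOn.mul_const _) measurableSet_Icc
      fun t ht => mul_le_mul_of_nonneg_left (hmax ht) (hw0 t)
  obtain ⟨r, hr, hφr⟩ := isPreconnected_Icc.intermediate_value hp hq hφ ⟨hlower, hupper⟩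
  exact ⟨r, hr, hφr.symm⟩

instance : IsFiniteMeasure muPi := by unfold muPi; infer_instance

lemma measurePreserving_neg_muPi : MeasurePreserving (fun s : ℝ => -s) muPi muPi := by
  have h := (Measure.measurePreserving_neg (volume : Measure ℝ)).restrict_preimage
    (s := Set.Icc (-Real.pi) Real.pi) measurableSet_Icc
  rwa [Set.neg_preimage, Set.neg_Icc, neg_neg] at h

lemma integrable_coeFn (f : Lp ℂ 2 muPi) : Integrable f muPi :=
  (Lp.memLp f).integrable (by norm_num)

lemma norm_exp_neg_I_mul (r s : ℝ) : ‖Complex.exp (-(Complex.I * r * s))‖ = 1 := by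
  rw [Complex.norm_exp]
  simp

noncomputable def expCoef (f : Lp ℂ 2 muPi) (r : ℝ) : ℂ :=
  coefWith (fun s => Complex.exp (Complex.I * r * s)) f

lemma expCoef_eq_integral (f : Lp ℂ 2 muPi) (r : ℝ) :
    expCoef f r = ∫ s, f s * Complex.exp (-(Complex.I * r * s)) ∂muPi := by
  simp only [expCoef, coefWith, ← Complex.exp_conj, map_mul, Complex.conj_I,
    Complex.conj_ofReal, neg_mul]

lemma integrable_mul_exp (f : Lp ℂ 2 muPi) (r : ℝ) :
    Integrable (fun s => f s * Complex.exp (-(Complex.I * r * s))) muPi :=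
  (integrable_coeFn f).mul_bdd (c := 1)
    (Continuous.aestronglyMeasurable (by fun_prop))
    (.of_forall fun s => (norm_exp_neg_I_mul r s).le)

lemma continuous_expCoef (f : Lp ℂ 2 muPi) : Continuous (expCoef f) := by
  simp only [funext (expCoef_eq_integral f)]
  refine continuous_of_dominated (bound := fun s => ‖f s‖)
    (fun r => (integrable_mul_exp f r).aestronglyMeasurable) (fun r => .of_forall fun s => ?_)
    (integrable_coeFn f).norm (.of_forall fun s => by fun_prop)
  rw [norm_mul, norm_exp_neg_I_mul, mul_one]

lemma norm_expCoef_le (f : Lp ℂ 2 muPi) (r : ℝ) : ‖expCoef f r‖ ≤ ∫ s, ‖f s‖ ∂muPi := by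
  rw [expCoef_eq_integral]
  refine (norm_integral_le_integral_norm _).trans_eq (integral_congr_ae (.of_forall fun s => ?_))
  simp only [norm_mul, norm_exp_neg_I_mul, mul_one]

noncomputable def reflectConj (f : Lp ℂ 2 muPi) : Lp ℂ 2 muPi :=
  star (Lp.compMeasurePreserving _ measurePreserving_neg_muPi f)

lemma coeFn_reflectConj (f : Lp ℂ 2 muPi) :
    reflectConj f =ᵐ[muPi] fun s => starRingEnd ℂ (f (-s)) := by
  filter_upwards [Lp.coeFn_star (Lp.compMeasurePreserving _ measurePreserving_neg_muPi f),
    Lp.coeFn_compMeasurePreserving f measurePreserving_neg_muPi] with s h1 h2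
  rw [reflectConj, h1, Pi.star_apply, h2]
  rfl

lemma norm_reflectConj (f : Lp ℂ 2 muPi) : ‖reflectConj f‖ = ‖f‖ := by
  rw [← Lp.norm_compMeasurePreserving f measurePreserving_neg_muPi, Lp.norm_def, Lp.norm_def,
    reflectConj, eLpNorm_congr_ae (Lp.coeFn_star _), eLpNorm_star]

lemma expCoef_reflectConj (f : Lp ℂ 2 muPi) (r : ℝ) :
    expCoef (reflectConj f) r = starRingEnd ℂ (expCoef f r) := by
  calc expCoef (reflectConj f) r
      = ∫ s, starRingEnd ℂ (f (-s)) * Complex.exp (-(Complex.I * r * s)) ∂muPi := by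
        rw [expCoef_eq_integral]
        refine integral_congr_ae ?_
        filter_upwards [coeFn_reflectConj f] with s hs
        rw [hs]
    _ = ∫ s, starRingEnd ℂ (f s * Complex.exp (-(Complex.I * r * s))) ∂muPi := by
        rw [← measurePreserving_neg_muPi.integral_comp (Homeomorph.neg ℝ).measurableEmbedding]
        simp only [map_mul, ← Complex.exp_conj, map_neg, Complex.conj_I, Complex.conj_ofReal,
          Complex.ofReal_neg]
        ring_nf
    _ = starRingEnd ℂ (expCoef f r) := by rw [integral_conj, expCoef_eq_integral]

lemma expCoef_add (f g : Lp ℂ 2 muPi) (r : ℝ) :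
    expCoef (f + g) r = expCoef f r + expCoef g r := by
  simp only [expCoef_eq_integral]
  rw [← integral_add (integrable_mul_exp f r) (integrable_mul_exp g r)]
  refine integral_congr_ae ?_
  filter_upwards [Lp.coeFn_add f g] with s hs
  rw [hs, Pi.add_apply, add_mul]

lemma expCoef_sub (f g : Lp ℂ 2 muPi) (r : ℝ) :
    expCoef (f - g) r = expCoef f r - expCoef g r := by
  simp only [expCoef_eq_integral]
  rw [← integral_sub (integrable_mul_exp f r) (integrable_mul_exp g r)]
  refine integral_congr_ae ?_
  filter_upwards [Lp.coeFn_sub f g] with s hs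
  rw [hs, Pi.sub_apply, sub_mul]

lemma expCoef_smul (c : ℂ) (f : Lp ℂ 2 muPi) (r : ℝ) : expCoef (c • f) r = c * expCoef f r := by
  simp only [expCoef_eq_integral]
  rw [← integral_const_mul]
  refine integral_congr_ae ?_
  filter_upwards [Lp.coeFn_smul c f] with s hs
  rw [hs, Pi.smul_apply, smul_eq_mul, mul_assoc]

noncomputable def rePart (f : Lp ℂ 2 muPi) : Lp ℂ 2 muPi := (2 : ℂ)⁻¹ • (f + reflectConj f)

noncomputable def imPart (f : Lp ℂ 2 muPi) : Lp ℂ 2 muPi :=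
  (2 * Complex.I)⁻¹ • (f - reflectConj f)

lemma expCoef_rePart (f : Lp ℂ 2 muPi) (r : ℝ) : expCoef (rePart f) r = (expCoef f r).re := by
  rw [rePart, expCoef_smul, expCoef_add, expCoef_reflectConj, Complex.add_conj]
  push_cast
  ring

lemma expCoef_imPart (f : Lp ℂ 2 muPi) (r : ℝ) : expCoef (imPart f) r = (expCoef f r).im := by
  rw [imPart, expCoef_smul, expCoef_sub, expCoef_reflectConj, Complex.sub_conj]
  push_cast
  field_simp

lemma norm_sq_add_norm_sq_of_norm_eq {E : Type*} [NormedAddCommGroup E] [InnerProductSpace ℂ E]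
    {f g : E} (h : ‖g‖ = ‖f‖) :
    ‖(2 : ℂ)⁻¹ • (f + g)‖ ^ 2 + ‖(2 * Complex.I)⁻¹ • (f - g)‖ ^ 2 = ‖f‖ ^ 2 := by
  have hpar := parallelogram_law_with_norm ℂ f g
  simp only [norm_smul, norm_inv, norm_mul, Complex.norm_I, Complex.norm_ofNat, h] at hpar ⊢
  linear_combination (1 / 4 : ℝ) * hpar

lemma norm_rePart_sq_add_norm_imPart_sq (f : Lp ℂ 2 muPi) :
    ‖rePart f‖ ^ 2 + ‖imPart f‖ ^ 2 = ‖f‖ ^ 2 :=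
  norm_sq_add_norm_sq_of_norm_eq (norm_reflectConj f)

lemma coefWith_const_mul (c : ℂ) (g : ℝ → ℂ) (f : Lp ℂ 2 muPi) :
    coefWith (fun s => c * g s) f = starRingEnd ℂ c * coefWith g f := by
  simp only [coefWith, map_mul, ← integral_const_mul]
  congr 1 with s
  ring

lemma coefWith_integral_mul_exp {w : ℝ → ℝ} (hw : Integrable w) (f : Lp ℂ 2 muPi) :
    coefWith (fun s => ∫ r, (w r : ℂ) * Complex.exp (Complex.I * r * s)) f
      = ∫ r, (w r : ℂ) * expCoef f r := by
  set F : ℝ → ℝ → ℂ := fun s r => f s * ((w r : ℂ) * Complex.exp (-(Complex.I * r * s)))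
  have hF : Integrable (Function.uncurry F) (muPi.prod volume) := by
    have hwC : Integrable (fun r => (w r : ℂ)) := hw.ofReal
    have h := ((integrable_coeFn f).mul_prod hwC).mul_bdd (c := 1)
      (g := fun z : ℝ × ℝ => Complex.exp (-(Complex.I * z.2 * z.1)))
      (Continuous.aestronglyMeasurable (by fun_prop))
      (.of_forall fun z => (norm_exp_neg_I_mul z.2 z.1).le)
    refine h.congr (.of_forall fun z => ?_)
    simp only [F, Function.uncurry]
    ring
  calc coefWith (fun s => ∫ r, (w r : ℂ) * Complex.exp (Complex.I * r * s)) f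
      = ∫ s, ∫ r, F s r ∂volume ∂muPi := by
        simp only [coefWith, F, ← integral_conj, ← integral_const_mul, map_mul,
          Complex.conj_ofReal, ← Complex.exp_conj, Complex.conj_I, neg_mul]
    _ = ∫ r, ∫ s, F s r ∂muPi := integral_integral_swap hF
    _ = ∫ r, (w r : ℂ) * expCoef f r := by
        simp only [F, expCoef_eq_integral, ← integral_const_mul]
        congr 1 with r
        congr 1 with s
        ring

lemma exists_norm_coefWith_integral_mul_exp_sq {w : ℝ → ℝ} {a b : ℝ} (hw0 : ∀ t, 0 ≤ w t)
    (hw1 : ∫ t, w t = 1) (hsupp : ∀ t, w t ≠ 0 → t ∈ Set.Icc a b) (f : Lp ℂ 2 muPi) :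
    ∃ r ∈ Set.Icc a b, ∃ r' ∈ Set.Icc a b,
      ‖coefWith (fun s => ∫ t, (w t : ℂ) * Complex.exp (Complex.I * t * s)) f‖ ^ 2
        = ‖expCoef (rePart f) r‖ ^ 2 + ‖expCoef (imPart f) r'‖ ^ 2 := by
  have hw : Integrable w := integrable_of_integral_eq_one hw1
  have hwC : Integrable (fun t => (w t : ℂ)) := hw.ofReal
  have hwF : Integrable (fun t => (w t : ℂ) * expCoef f t) :=
    hwC.mul_bdd (continuous_expCoef f).aestronglyMeasurable (.of_forall (norm_expCoef_le f))
  obtain ⟨r, hr, hre⟩ := exists_mem_Icc_integral_mul_eq hw0 hw1 hsupp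
    (Complex.continuous_re.comp (continuous_expCoef f)).continuousOn
  obtain ⟨r', hr', him⟩ := exists_mem_Icc_integral_mul_eq hw0 hw1 hsupp
    (Complex.continuous_im.comp (continuous_expCoef f)).continuousOn
  refine ⟨r, hr, r', hr', ?_⟩
  have hre' := integral_re hwF
  have him' := integral_im hwF
  simp only [RCLike.re_to_complex, RCLike.im_to_complex, Complex.re_ofReal_mul,
    Complex.im_ofReal_mul, Function.comp_apply] at hre' him' hre him
  rw [coefWith_integral_mul_exp hw, Complex.sq_norm, Complex.normSq_apply, expCoef_rePart,
    expCoef_imPart, Complex.norm_real, Complex.norm_real, Real.norm_eq_abs, Real.norm_eq_abs,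
    sq_abs, sq_abs, ← hre', ← him', hre, him]
  ring

lemma isFrameCoef_iff_sq {J : Type*} {g : J → ℝ → ℂ} {A B : ℝ} (hA : 0 ≤ A) (hB : 0 ≤ B) :
    IsFrameCoef g A B ↔ ∀ f : Lp ℂ 2 muPi, ∃ S : ℝ, HasSum (fun j => ‖coefWith (g j) f‖ ^ 2) S ∧
      (A * ‖f‖) ^ 2 ≤ S ∧ S ≤ (B * ‖f‖) ^ 2 := by
  refine forall_congr' fun f => exists_congr fun S => and_congr_right fun hS => ?_
  have hS0 : 0 ≤ S := hS.nonneg fun _ => by positivity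
  rw [Real.le_sqrt (by positivity) hS0, Real.sqrt_le_left (by positivity)]

theorem statement16_general (δ : ℝ) (x : ℤ → ℝ) (u : ℝ → ℝ → ℝ)
    (hu0 : ∀ a t : ℝ, 0 ≤ u a t)
    (huint : ∀ a : ℝ, (∫ t, u a t) = 1)
    (husupp : ∀ a t : ℝ, u a t ≠ 0 → t ∈ Set.Icc (a - δ) (a + δ))
    (A B : ℝ) (hA : 0 < A) (hAB : A ≤ B)
    (hframe : ∀ t : ℤ → ℝ, (∀ j, t j ∈ Set.Icc (x j - δ) (x j + δ)) →
      IsFrameCoef (fun j s => Complex.exp (Complex.I * (t j : ℂ) * (s : ℂ))) A B) :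
    ∃ A' B' : ℝ, 0 < A' ∧ A' ≤ B' ∧
      IsFrameCoef (fun j s => ((Real.sqrt (2 * Real.pi))⁻¹ : ℂ) *
        ∫ r : ℝ, (u (x j) r : ℂ) * Complex.exp (Complex.I * (r : ℂ) * (s : ℂ))) A' B' := by
  set c : ℂ := ((Real.sqrt (2 * Real.pi))⁻¹ : ℂ)
  have hc : 0 < ‖c‖ := by simp [c, Real.sqrt_ne_zero', Real.pi_pos]
  have hB : 0 ≤ B := hA.le.trans hAB
  refine ⟨‖c‖ * A, ‖c‖ * B, by positivity, by gcongr, ?_⟩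
  rw [isFrameCoef_iff_sq (by positivity) (by positivity)]
  intro f
  choose r hr r' hr' hcoef using fun j =>
    exists_norm_coefWith_integral_mul_exp_sq (hu0 (x j)) (huint (x j)) (husupp (x j)) f
  obtain ⟨S, hS, hSA, hSB⟩ := (isFrameCoef_iff_sq hA.le hB).1 (hframe r hr) (rePart f)
  obtain ⟨S', hS', hSA', hSB'⟩ := (isFrameCoef_iff_sq hA.le hB).1 (hframe r' hr') (imPart f)
  have hsplit := norm_rePart_sq_add_norm_imPart_sq f
  refine ⟨‖c‖ ^ 2 * (S + S'), ?_, ?_, ?_⟩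
  · simp only [coefWith_const_mul, norm_mul, Complex.norm_conj, mul_pow, hcoef]
    exact (hS.add hS').mul_left _
  · calc (‖c‖ * A * ‖f‖) ^ 2 = ‖c‖ ^ 2 * ((A * ‖rePart f‖) ^ 2 + (A * ‖imPart f‖) ^ 2) := by
          linear_combination -(‖c‖ * A) ^ 2 * hsplit
      _ ≤ ‖c‖ ^ 2 * (S + S') := by gcongr
  · calc ‖c‖ ^ 2 * (S + S') ≤ ‖c‖ ^ 2 * ((B * ‖rePart f‖) ^ 2 + (B * ‖imPart f‖) ^ 2) := by gcongr
      _ = (‖c‖ * B * ‖f‖) ^ 2 := by linear_combination (‖c‖ * B) ^ 2 * hsplit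

/-- Theorem 6.10, average sampling frames. Let `δ > 0`, `(x j)_{j ∈ ℤ}`
reals, and for each `x ∈ ℝ` let `u x : ℝ → [0, ∞)` be measurable with `∫ u x = 1` and
supported in `[x - δ, x + δ]`. If there are `0 < A ≤ B` such that for EVERY sequence
`(t j)` with `t j ∈ [x j - δ, x j + δ]` the exponentials `s ↦ e^{i t_j s}` form a frame of
`L²([-π, π])` with bounds `A, B`, then the averaged exponentials
`Ψ (x j) : s ↦ (2π)^{-1/2} ∫ u (x j) r · e^{i r s} dr` form a frame of `L²([-π, π])`. -/
theorem statement16 (δ : ℝ) (hδ : 0 < δ) (x : ℤ → ℝ) (u : ℝ → ℝ → ℝ)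
    (hu0 : ∀ a t : ℝ, 0 ≤ u a t) (humeas : ∀ a : ℝ, Measurable (u a))
    (huint : ∀ a : ℝ, (∫ t, u a t) = 1)
    (husupp : ∀ a t : ℝ, u a t ≠ 0 → t ∈ Set.Icc (a - δ) (a + δ))
    (A B : ℝ) (hA : 0 < A) (hAB : A ≤ B)
    (hframe : ∀ t : ℤ → ℝ, (∀ j, t j ∈ Set.Icc (x j - δ) (x j + δ)) →
      IsFrameCoef (fun j s => Complex.exp (Complex.I * (t j : ℂ) * (s : ℂ))) A B) :
    ∃ A' B' : ℝ, 0 < A' ∧ A' ≤ B' ∧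
      IsFrameCoef (fun j s => ((Real.sqrt (2 * Real.pi))⁻¹ : ℂ) *
        ∫ r : ℝ, (u (x j) r : ℂ) * Complex.exp (Complex.I * (r : ℂ) * (s : ℂ))) A' B' :=
  statement16_general δ x u hu0 huint husupp A B hA hAB hframe
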